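/- Let M be a compact metric space, e : ℕ → M an injective map with dense range, and P a natural measure on M. If S ⊆ ℕ is ν*-measurable, then S has asymptotic density and d(S) = ν(S) = P(cl(e(S))). -/

import Mathlib

open Filter MeasureTheory
open scoped Classical

/-- `E_N(𝟙_A) = |A ∩ [1,N]| / N`. -/
noncomputable def densSeq (A : Set ℕ) : ℕ → ℝ := fun N =>
  (((Finset.Icc 1 N).filter (fun n => n ∈ A)).card : ℝ) / N

/-- `P` is a natural measure (w.r.t. the dense embedding `e : ℕ → M`) if the
sequence `(e(n))` is `P`-uniformly distributed in `M` and every nonempty open set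
has positive measure. -/
def IsNaturalMeasure {M : Type*} [MetricSpace M] [MeasurableSpace M]
    (e : ℕ → M) (P : Measure M) : Prop :=
  (∀ f : M → ℝ, Continuous f →
    Tendsto (fun N : ℕ => (∑ n ∈ Finset.Icc 1 N, f (e n)) / N) atTop
      (nhds (∫ α, f α ∂P))) ∧
  (∀ U : Set M, IsOpen U → U.Nonempty → 0 < P U)

/-!
Urysohn's lemma and outer regularity give, for every `ε > 0`, a continuous `0 ≤ f` that is `1` on
`cl(e(A))` with `∫ f dP ≤ P(cl(e(A))) + ε`. Since `f ∘ e` dominates the indicator of `A`,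
equidistribution of `(e n)` yields `limsup d_N(A) ≤ P(cl(e(A)))` for every `A ⊆ ℕ`. Applied to `Sᶜ`,
with `d_N(S) + d_N(Sᶜ) = 1`, this gives `liminf d_N(S) ≥ 1 - P(cl(e(Sᶜ))) = P(cl(e(S)))`.
-/

lemma densSeq_eq_average_indicator (A : Set ℕ) (N : ℕ) :
    densSeq A N = (∑ n ∈ Finset.Icc 1 N, A.indicator 1 n) / N := by
  simp [densSeq, Set.indicator_apply, Finset.sum_boole]

lemma densSeq_nonneg (A : Set ℕ) (N : ℕ) : 0 ≤ densSeq A N := by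
  unfold densSeq; positivity

lemma densSeq_add_densSeq_compl (A : Set ℕ) {N : ℕ} (hN : N ≠ 0) :
    densSeq A N + densSeq Aᶜ N = 1 := by
  simp only [densSeq_eq_average_indicator, ← add_div, ← Finset.sum_add_distrib]
  simp [Set.indicator_self_add_compl_apply, hN]

lemma densSeq_le_one (A : Set ℕ) (N : ℕ) : densSeq A N ≤ 1 := by
  rcases eq_or_ne N 0 with rfl | hN
  · simp [densSeq]
  · linarith [densSeq_add_densSeq_compl A hN, densSeq_nonneg Aᶜ N]

lemma isBoundedUnder_le_densSeq (A : Set ℕ) : IsBoundedUnder (· ≤ ·) atTop (densSeq A) :=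
  isBoundedUnder_of ⟨1, densSeq_le_one A⟩

lemma isBoundedUnder_ge_densSeq (A : Set ℕ) : IsBoundedUnder (· ≥ ·) atTop (densSeq A) :=
  isBoundedUnder_of ⟨0, densSeq_nonneg A⟩

lemma densSeq_le_average {A : Set ℕ} {g : ℕ → ℝ} (hg : ∀ n, 0 ≤ g n)
    (hgA : ∀ n ∈ A, 1 ≤ g n) (N : ℕ) :
    densSeq A N ≤ (∑ n ∈ Finset.Icc 1 N, g n) / N := by
  rw [densSeq_eq_average_indicator]
  gcongr with n
  by_cases hn : n ∈ A <;> simp [hn, hg, hgA]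

lemma liminf_densSeq_eq_one_sub_limsup_compl (A : Set ℕ) :
    liminf (densSeq A) atTop = 1 - limsup (densSeq Aᶜ) atTop := by
  have h_eq : densSeq A =ᶠ[atTop] fun N => 1 - densSeq Aᶜ N := by
    filter_upwards [eventually_ne_atTop 0] with N hN
    linarith [densSeq_add_densSeq_compl A hN]
  rw [liminf_congr h_eq, liminf_const_sub _ _ _ (isBoundedUnder_le_densSeq Aᶜ)
    (isBoundedUnder_ge_densSeq Aᶜ).isCoboundedUnder_le]

lemma exists_continuous_eqOn_one_integral_le {X : Type*} [TopologicalSpace X] [NormalSpace X]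
    [MeasurableSpace X] [OpensMeasurableSpace X] (μ : Measure X) [IsFiniteMeasure μ]
    [μ.OuterRegular] {C : Set X} (hC : IsClosed C) {ε : ℝ} (hε : 0 < ε) :
    ∃ f : C(X, ℝ), (∀ x, 0 ≤ f x) ∧ Set.EqOn f 1 C ∧ ∫ x, f x ∂μ ≤ μ.real C + ε := by
  obtain ⟨U, hCU, hU, hμU⟩ := C.exists_isOpen_lt_of_lt (μ C + ENNReal.ofReal ε)
    (ENNReal.lt_add_right (measure_ne_top μ C) (by simp [hε]))
  obtain ⟨f, hf0, hf1, hf01⟩ := exists_continuous_zero_one_of_isClosed hU.isClosed_compl hC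
    (Set.disjoint_compl_left_iff_subset.mpr hCU)
  have hf_le : ∀ x, f x ≤ U.indicator 1 x := by
    intro x
    by_cases hx : x ∈ U
    · simpa [hx] using (hf01 x).2
    · simp [hx, hf0 hx]
  refine ⟨f, fun x => (hf01 x).1, hf1, ?_⟩
  calc ∫ x, f x ∂μ ≤ ∫ x, U.indicator 1 x ∂μ :=
        integral_mono ((integrable_const 1).mono' f.continuous.aestronglyMeasurable
          (ae_of_all _ fun x => abs_le.mpr ⟨by linarith [(hf01 x).1], (hf01 x).2⟩))
          ((integrable_const 1).indicator hU.measurableSet) hf_le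
    _ = μ.real U := by simp [integral_indicator_one hU.measurableSet]
    _ ≤ μ.real C + ε := by
        rw [← ENNReal.toReal_ofReal hε.le, measureReal_def, measureReal_def,
          ← ENNReal.toReal_add (measure_ne_top μ C) ENNReal.ofReal_ne_top]
        exact ENNReal.toReal_mono (by finiteness) hμU.le

lemma limsup_densSeq_le_measureReal_closure {M : Type*} [MetricSpace M] [MeasurableSpace M]
    [BorelSpace M] (P : Measure M) [IsFiniteMeasure P] (e : ℕ → M)
    (h_equidist : ∀ f : M → ℝ, Continuous f →
      Tendsto (fun N : ℕ => (∑ n ∈ Finset.Icc 1 N, f (e n)) / N) atTop (nhds (∫ x, f x ∂P)))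
    (A : Set ℕ) :
    limsup (densSeq A) atTop ≤ P.real (closure (e '' A)) := by
  refine le_of_forall_pos_le_add fun ε hε => ?_
  obtain ⟨f, hf0, hf1, hf_int⟩ :=
    exists_continuous_eqOn_one_integral_le P isClosed_closure hε
  have hf := h_equidist f f.continuous
  have h_le : ∀ N, densSeq A N ≤ (∑ n ∈ Finset.Icc 1 N, f (e n)) / N :=
    densSeq_le_average (fun n => hf0 (e n))
      (fun n hn => (hf1 (subset_closure (Set.mem_image_of_mem e hn))).ge)
  calc limsup (densSeq A) atTop
      ≤ limsup (fun N : ℕ => (∑ n ∈ Finset.Icc 1 N, f (e n)) / N) atTop :=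
        limsup_le_limsup (Eventually.of_forall h_le)
          (isBoundedUnder_ge_densSeq A).isCoboundedUnder_le hf.isBoundedUnder_le
    _ = ∫ x, f x ∂P := hf.limsup_eq
    _ ≤ P.real (closure (e '' A)) + ε := hf_int

theorem stmt11_general {M : Type*} [MetricSpace M]
    [MeasurableSpace M] [BorelSpace M]
    (P : Measure M) [IsProbabilityMeasure P]
    (e : ℕ → M)
    (hP : IsNaturalMeasure e P) (S : Set ℕ)
    (hS : P (closure (e '' S)) + P (closure (e '' Sᶜ)) = 1) :
    Tendsto (densSeq S) atTop (nhds ((P (closure (e '' S))).toReal)) := by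
  have h_sum : P.real (closure (e '' S)) + P.real (closure (e '' Sᶜ)) = 1 := by
    rw [measureReal_def, measureReal_def, ← ENNReal.toReal_add (measure_ne_top _ _)
      (measure_ne_top _ _), hS, ENNReal.toReal_one]
  have h_upper := limsup_densSeq_le_measureReal_closure P e hP.1 S
  have h_upper_compl := limsup_densSeq_le_measureReal_closure P e hP.1 Sᶜ
  refine tendsto_of_le_liminf_of_limsup_le ?_ h_upper
    (isBoundedUnder_le_densSeq S) (isBoundedUnder_ge_densSeq S)
  rw [liminf_densSeq_eq_one_sub_limsup_compl, ← measureReal_def]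
  linarith

/-- If `S ⊆ ℕ` is `ν*`-measurable (where `ν*(S) = P(cl(e(S)))` for a natural
measure `P`), then `S` has asymptotic density and `d(S) = ν(S) = P(cl(e(S)))`. -/
theorem stmt11 {M : Type*} [MetricSpace M] [CompactSpace M]
    [MeasurableSpace M] [BorelSpace M]
    (P : Measure M) [IsProbabilityMeasure P]
    (e : ℕ → M) (he : Function.Injective e) (hd : DenseRange e)
    (hP : IsNaturalMeasure e P) (S : Set ℕ)
    (hS : P (closure (e '' S)) + P (closure (e '' Sᶜ)) = 1) :
    Tendsto (densSeq S) atTop (nhds ((P (closure (e '' S))).toReal)) :=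
  stmt11_general P e hP S hS
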